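/- For c > 0, a > -1 and any real μ, ∫₀^{∞} A^a · exp(-c·A² + μ·A) dA = (1/2)·c^{-(a+1)/2} · ( Γ((1+a)/2) · ₁F₁((1+a)/2; 1/2; μ²/(4c)) + μ·c^{-1/2} · Γ(1 + a/2) · ₁F₁(1 + a/2; 3/2; μ²/(4c)) ). -/

import Mathlib

open Real MeasureTheory Finset

/-- Rising factorial (Pochhammer symbol) `(x)ₖ = x (x+1) ⋯ (x+k-1)`. -/
noncomputable def pochhammerReal (x : ℝ) (k : ℕ) : ℝ :=
  ∏ i ∈ Finset.range k, (x + i)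

/-- Kummer confluent hypergeometric function `₁F₁(a; b; z)`. -/
noncomputable def hyp1F1 (a b z : ℝ) : ℝ :=
  ∑' k : ℕ, pochhammerReal a k * z ^ k / (pochhammerReal b k * (Nat.factorial k))

lemma pochhammerReal_succ (x : ℝ) (k : ℕ) :
    pochhammerReal x (k + 1) = pochhammerReal x k * (x + k) :=
  Finset.prod_range_succ _ _

lemma pochhammerReal_pos {x : ℝ} (hx : 0 < x) (k : ℕ) : 0 < pochhammerReal x k :=
  Finset.prod_pos fun i _ => by positivity

lemma Gamma_add_nat {x : ℝ} (hx : 0 < x) (k : ℕ) :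
    Real.Gamma (x + k) = Real.Gamma x * pochhammerReal x k := by
  induction k with
  | zero => simp [pochhammerReal]
  | succ n ih =>
    have hxn : x + (n : ℝ) ≠ 0 := by positivity
    have h : x + ((n + 1 : ℕ) : ℝ) = (x + n) + 1 := by push_cast; ring
    rw [h, Real.Gamma_add_one hxn, ih, pochhammerReal_succ]; ring

lemma factorial_two_mul_real (m : ℕ) :
    (((2 * m).factorial : ℝ)) = 4 ^ m * m.factorial * pochhammerReal (1 / 2) m := by
  induction m with
  | zero => simp [pochhammerReal]
  | succ n ih =>
    have h : 2 * (n + 1) = (2 * n) + 1 + 1 := by ring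
    rw [h, Nat.factorial_succ, Nat.factorial_succ]
    push_cast
    rw [ih, pochhammerReal_succ, Nat.factorial_succ]
    push_cast
    ring

lemma factorial_two_mul_add_one_real (m : ℕ) :
    (((2 * m + 1).factorial : ℝ)) = 4 ^ m * m.factorial * pochhammerReal (3 / 2) m := by
  induction m with
  | zero => simp [pochhammerReal]
  | succ n ih =>
    have h : 2 * (n + 1) + 1 = ((2 * n + 1) + 1) + 1 := by ring
    rw [h, Nat.factorial_succ, Nat.factorial_succ]
    push_cast
    rw [ih, pochhammerReal_succ, Nat.factorial_succ]
    push_cast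
    ring

lemma gauss_moment {s c : ℝ} (hs : -1 < s) (hc : 0 < c) :
    ∫ x in Set.Ioi (0:ℝ), x ^ s * Real.exp (-c * x ^ 2) =
      c ^ (-(s + 1) / 2) * (1 / 2) * Real.Gamma ((s + 1) / 2) := by
  rw [← integral_rpow_mul_exp_neg_mul_rpow two_pos hs hc]
  refine setIntegral_congr_fun measurableSet_Ioi fun x hx => ?_
  rw [Real.rpow_two]

lemma exp_tsum (x : ℝ) : Real.exp x = ∑' n : ℕ, x ^ n / n.factorial := by
  rw [Real.exp_eq_exp_ℝ, NormedSpace.exp_eq_tsum_div]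

set_option maxHeartbeats 1000000 in
theorem gaussian_moment_integral_with_drift (a c μ : ℝ) (ha : -1 < a) (hc : 0 < c) :
    ∫ A in Set.Ioi (0:ℝ), A ^ a * Real.exp (-c * A ^ 2 + μ * A) =
      (1 / 2) * c ^ (-((a + 1) / 2)) *
        (Real.Gamma ((1 + a) / 2) * hyp1F1 ((1 + a) / 2) (1 / 2) (μ ^ 2 / (4 * c)) +
          μ * c ^ (-(1 / 2 : ℝ)) * Real.Gamma (1 + a / 2) *
            hyp1F1 (1 + a / 2) (3 / 2) (μ ^ 2 / (4 * c))) := by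
  set b := |μ| with hb
  set f : ℕ → ℝ → ℝ := fun k A => (A ^ a * Real.exp (-c * A ^ 2)) * ((μ * A) ^ k / k.factorial)
    with hf
  -- rewrite pointwise as a tsum
  have hexp : ∀ A : ℝ, A ^ a * Real.exp (-c * A ^ 2 + μ * A) = ∑' k, f k A := by
    intro A
    rw [Real.exp_add, ← mul_assoc, exp_tsum (μ * A)]
    exact (tsum_mul_left).symm
  -- measurability
  have hmeas : ∀ k, AEStronglyMeasurable (f k) (volume.restrict (Set.Ioi 0)) := by
    intro k
    apply Measurable.aestronglyMeasurable
    fun_prop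
  -- integrability of the majorant
  have hint : IntegrableOn (fun A : ℝ => A ^ a * Real.exp (-c * A ^ 2 + b * A))
      (Set.Ioi 0) := by
    have hc2 : (0:ℝ) < c / 2 := by linarith
    refine Integrable.mono'
      (((integrableOn_rpow_mul_exp_neg_mul_sq hc2 ha).const_mul (Real.exp (b ^ 2 / (2 * c)))))
      (by apply Measurable.aestronglyMeasurable; fun_prop) ?_
    filter_upwards [ae_restrict_mem measurableSet_Ioi] with A hA
    have hA0 : (0:ℝ) < A := hA
    have h1 : 0 ≤ A ^ a := (Real.rpow_pos_of_pos hA0 a).le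
    rw [Real.norm_eq_abs, abs_mul, abs_of_nonneg h1, abs_of_nonneg (Real.exp_pos _).le]
    have key : -c * A ^ 2 + b * A ≤ b ^ 2 / (2 * c) + (-(c / 2) * A ^ 2) := by
      rw [← sub_nonneg]
      have heq : b ^ 2 / (2 * c) + (-(c / 2) * A ^ 2) - (-c * A ^ 2 + b * A) =
          (c * A - b) ^ 2 / (2 * c) := by field_simp; ring
      rw [heq]; positivity
    calc A ^ a * Real.exp (-c * A ^ 2 + b * A)
        ≤ A ^ a * Real.exp (b ^ 2 / (2 * c) + (-(c / 2) * A ^ 2)) := by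
          exact mul_le_mul_of_nonneg_left (Real.exp_le_exp.mpr key) h1
      _ = Real.exp (b ^ 2 / (2 * c)) * (A ^ a * Real.exp (-(c / 2) * A ^ 2)) := by
          rw [Real.exp_add]; ring
  -- pointwise norm computation
  have hnorm : ∀ A ∈ Set.Ioi (0:ℝ), ∀ k : ℕ,
      (‖f k A‖₊ : ENNReal) =
        ENNReal.ofReal ((A ^ a * Real.exp (-c * A ^ 2)) * ((b * A) ^ k / k.factorial)) := by
    intro A hA k
    have hA0 : (0:ℝ) < A := hA
    rw [show (‖f k A‖₊ : ENNReal) = ENNReal.ofReal ‖f k A‖ from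
      (ENNReal.ofReal_eq_coe_nnreal (norm_nonneg _)).symm]
    congr 1
    rw [hf]
    simp only [Real.norm_eq_abs, abs_mul, abs_div, abs_pow, abs_mul,
      abs_of_nonneg (Real.rpow_pos_of_pos hA0 a).le, abs_of_nonneg (Real.exp_pos _).le,
      abs_of_nonneg hA0.le, Nat.abs_cast, hb]
  -- finiteness of the sum of lintegrals
  have hfin : (∑' k : ℕ, ∫⁻ A in Set.Ioi 0, (‖f k A‖₊ : ENNReal)) ≠ ⊤ := by
    rw [← MeasureTheory.lintegral_tsum (fun k => (hmeas k).nnnorm.aemeasurable.coe_nnreal_ennreal)]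
    have heq : ∫⁻ A in Set.Ioi 0, (∑' k : ℕ, (‖f k A‖₊ : ENNReal)) =
        ∫⁻ A in Set.Ioi 0, ENNReal.ofReal (A ^ a * Real.exp (-c * A ^ 2 + b * A)) := by
      refine setLIntegral_congr_fun measurableSet_Ioi ?_
      intro A hA
      have hA0 : (0:ℝ) < A := hA
      have hnn : ∀ k : ℕ, 0 ≤ (A ^ a * Real.exp (-c * A ^ 2)) * ((b * A) ^ k / k.factorial) := by
        intro k
        have : (0:ℝ) ≤ b * A := mul_nonneg (abs_nonneg μ) hA0.le
        positivity
      have hsum : Summable (fun k : ℕ =>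
          (A ^ a * Real.exp (-c * A ^ 2)) * ((b * A) ^ k / k.factorial)) :=
        (Real.summable_pow_div_factorial (b * A)).mul_left _
      calc (∑' k : ℕ, (‖f k A‖₊ : ENNReal))
          = ∑' k : ℕ, ENNReal.ofReal
              ((A ^ a * Real.exp (-c * A ^ 2)) * ((b * A) ^ k / k.factorial)) := by
            exact tsum_congr fun k => hnorm A hA k
        _ = ENNReal.ofReal (∑' k : ℕ,
              (A ^ a * Real.exp (-c * A ^ 2)) * ((b * A) ^ k / k.factorial)) :=
            (ENNReal.ofReal_tsum_of_nonneg hnn hsum).symm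
        _ = ENNReal.ofReal (A ^ a * Real.exp (-c * A ^ 2 + b * A)) := by
            rw [tsum_mul_left, ← exp_tsum (b * A), Real.exp_add, mul_assoc]
    rw [heq, ← ofReal_integral_eq_lintegral_ofReal hint]
    · exact ENNReal.ofReal_ne_top
    · filter_upwards [ae_restrict_mem measurableSet_Ioi] with A hA
      have hA0 : (0:ℝ) < A := hA
      positivity
  -- swap integral and sum
  have hswap : ∫ A in Set.Ioi (0:ℝ), A ^ a * Real.exp (-c * A ^ 2 + μ * A) =
      ∑' k : ℕ, ∫ A in Set.Ioi (0:ℝ), f k A := by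
    rw [show (fun A : ℝ => A ^ a * Real.exp (-c * A ^ 2 + μ * A)) = fun A => ∑' k, f k A from
      funext hexp]
    exact MeasureTheory.integral_tsum hmeas hfin
  -- evaluate each integral
  have hval : ∀ k : ℕ, ∫ A in Set.Ioi (0:ℝ), f k A =
      μ ^ k / k.factorial * (c ^ (-(a + k + 1) / 2) * (1 / 2) * Real.Gamma ((a + k + 1) / 2)) := by
    intro k
    have hak : -1 < a + k := by
      have : (0:ℝ) ≤ k := Nat.cast_nonneg k
      linarith
    have h1 : ∫ A in Set.Ioi (0:ℝ), f k A =
        μ ^ k / k.factorial * ∫ A in Set.Ioi (0:ℝ), A ^ (a + k) * Real.exp (-c * A ^ 2) := by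
      rw [← MeasureTheory.integral_const_mul]
      refine setIntegral_congr_fun measurableSet_Ioi fun A hA => ?_
      have hA0 : (0:ℝ) < A := hA
      rw [hf]
      simp only
      rw [Real.rpow_add hA0, Real.rpow_natCast, mul_pow]
      ring
    rw [h1, gauss_moment hak hc]
  -- summability of the term series
  have hsummable : Summable (fun k : ℕ => ∫ A in Set.Ioi (0:ℝ), f k A) := by
    have htoReal : Summable (fun k : ℕ =>
        (∫⁻ A in Set.Ioi 0, (‖f k A‖₊ : ENNReal)).toReal) :=
      ENNReal.summable_toReal hfin
    refine Summable.of_norm_bounded htoReal fun k => ?_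
    have h := MeasureTheory.norm_integral_le_lintegral_norm
      (μ := volume.restrict (Set.Ioi 0)) (f k)
    exact h.trans_eq (congrArg ENNReal.toReal
      (lintegral_congr fun A => ENNReal.ofReal_eq_coe_nnreal (norm_nonneg _)))
  -- split into even and odd parts
  have hinj1 : Function.Injective (fun m : ℕ => 2 * m) := fun m n h => by
    simp only [] at h; omega
  have hinj2 : Function.Injective (fun m : ℕ => 2 * m + 1) := fun m n h => by
    simp only [] at h; omega
  have he : Summable (fun m : ℕ => ∫ A in Set.Ioi (0:ℝ), f (2 * m) A) :=
    hsummable.comp_injective hinj1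
  have ho : Summable (fun m : ℕ => ∫ A in Set.Ioi (0:ℝ), f (2 * m + 1) A) :=
    hsummable.comp_injective hinj2
  have hsplit := tsum_even_add_odd
    (f := fun k : ℕ => ∫ A in Set.Ioi (0:ℝ), f k A) he ho
  rw [hswap, ← hsplit]
  -- positivity facts
  have hA1 : (0:ℝ) < (1 + a) / 2 := by linarith
  have hA2 : (0:ℝ) < 1 + a / 2 := by linarith
  -- even part
  have heven : (∑' m : ℕ, ∫ A in Set.Ioi (0:ℝ), f (2 * m) A) =
      (1 / 2 * c ^ (-((a + 1) / 2)) * Real.Gamma ((1 + a) / 2)) *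
        hyp1F1 ((1 + a) / 2) (1 / 2) (μ ^ 2 / (4 * c)) := by
    rw [hyp1F1, ← tsum_mul_left]
    refine tsum_congr fun m => ?_
    rw [hval (2 * m)]
    have e1 : (a + ((2 * m : ℕ) : ℝ) + 1) / 2 = (1 + a) / 2 + m := by push_cast; ring
    have e2 : c ^ (-(a + ((2 * m : ℕ) : ℝ) + 1) / 2) =
        c ^ (-((a + 1) / 2)) * ((c ^ m)⁻¹ : ℝ) := by
      rw [← Real.rpow_natCast c m, ← Real.rpow_neg hc.le, ← Real.rpow_add hc]
      congr 1
      push_cast; ring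
    rw [e1, e2, Gamma_add_nat hA1 m, factorial_two_mul_real m]
    have h4c : (4 * c) ≠ 0 := by positivity
    have hfm : (m.factorial : ℝ) ≠ 0 := Nat.cast_ne_zero.mpr m.factorial_ne_zero
    have hp : pochhammerReal (1 / 2) m ≠ 0 := (pochhammerReal_pos one_half_pos m).ne'
    have hcm : (c : ℝ) ^ m ≠ 0 := pow_ne_zero m hc.ne'
    have hmu : μ ^ (2 * m) = (μ ^ 2) ^ m := by rw [pow_mul]
    rw [hmu, div_pow, mul_pow]
    field_simp
  -- odd part
  have hodd : (∑' m : ℕ, ∫ A in Set.Ioi (0:ℝ), f (2 * m + 1) A) =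
      (1 / 2 * c ^ (-((a + 1) / 2)) * (μ * c ^ (-(1 / 2 : ℝ)) * Real.Gamma (1 + a / 2))) *
        hyp1F1 (1 + a / 2) (3 / 2) (μ ^ 2 / (4 * c)) := by
    rw [hyp1F1, ← tsum_mul_left]
    refine tsum_congr fun m => ?_
    rw [hval (2 * m + 1)]
    have e1 : (a + ((2 * m + 1 : ℕ) : ℝ) + 1) / 2 = (1 + a / 2) + m := by push_cast; ring
    have e2 : c ^ (-(a + ((2 * m + 1 : ℕ) : ℝ) + 1) / 2) =
        c ^ (-((a + 1) / 2)) * c ^ (-(1 / 2 : ℝ)) * ((c ^ m)⁻¹ : ℝ) := by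
      rw [← Real.rpow_natCast c m, ← Real.rpow_neg hc.le, ← Real.rpow_add hc,
        ← Real.rpow_add hc]
      congr 1
      push_cast; ring
    rw [e1, e2, Gamma_add_nat hA2 m, factorial_two_mul_add_one_real m]
    have hfm : (m.factorial : ℝ) ≠ 0 := Nat.cast_ne_zero.mpr m.factorial_ne_zero
    have hp : pochhammerReal (3 / 2) m ≠ 0 := (pochhammerReal_pos (by norm_num) m).ne'
    have hcm : (c : ℝ) ^ m ≠ 0 := pow_ne_zero m hc.ne'
    have hmu : μ ^ (2 * m + 1) = μ * (μ ^ 2) ^ m := by rw [pow_succ, pow_mul]; ring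
    rw [hmu, div_pow, mul_pow]
    field_simp
  rw [heven, hodd]
  ring
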